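/- arXiv:2212.06022 — 2 statements merged into one kernel-verified Lean document; each statement's English description precedes it below -/
import Mathlib

section
/- Let the grading by q be good for the ad-nilpotent element f ∈ 𝔤, let 𝔪 be a good algebra for (f,q) and χ := B(f,·). Then: (i) 𝔪 is a Lie subalgebra of 𝔤 and every z ∈ 𝔪 is ad-nilpotent; (ii) χ restricts to a character of 𝔪, i.e. χ(⁅x,y⁆) = 0 for all x,y ∈ 𝔪; (iii) 2·dim 𝔪 = dim 𝔤 − dim ker(ad f). -/
open LieAlgebra Module

noncomputable section

variable {L : Type*} [LieRing L] [LieAlgebra ℂ L]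

/-- The `j`-eigenspace of `ad q` on the Lie algebra. -/
def gSp (q : L) (j : ℤ) : Submodule ℂ L where
  carrier := {x | ⁅q, x⁆ = (j : ℂ) • x}
  add_mem' {a b} ha hb := by
    simp only [Set.mem_setOf_eq] at *
    rw [lie_add, ha, hb, smul_add]
  zero_mem' := by simp
  smul_mem' c x hx := by
    simp only [Set.mem_setOf_eq] at *
    rw [lie_smul, hx, smul_comm]

/-- The grading by `q` (whose adjoint action is diagonalizable with integer eigenvalues)
is good for `f`. -/
structure IsGoodGrading (q f : L) : Prop where
  decomp : (⨆ j : ℤ, gSp q j) = ⊤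
  f_mem : f ∈ gSp q (-2)
  inj : ∀ j : ℤ, 1 ≤ j → ∀ x ∈ gSp q j, ⁅f, x⁆ = 0 → x = 0
  surj : ∀ j : ℤ, j ≤ 1 → ∀ y ∈ gSp q (j - 2), ∃ x ∈ gSp q j, ⁅f, x⁆ = y

/-- `m` is a good algebra for `(f, q)`: `m = l ⊕ ⨁_{j ≥ 2} 𝔤_j(q)` for a Lagrangian
subspace `l` of `𝔤₁(q)` with respect to the symplectic form `(x, y) ↦ B f ⁅x, y⁆`. -/
def IsGoodAlgebra (B : LinearMap.BilinForm ℂ L) (q f : L) (m : Submodule ℂ L) : Prop :=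
  ∃ l : Submodule ℂ L, l ≤ gSp q 1 ∧
    (∀ x ∈ l, ∀ y ∈ l, B f ⁅x, y⁆ = 0) ∧
    (∀ x ∈ gSp q 1, (∀ y ∈ l, B f ⁅x, y⁆ = 0) → x ∈ l) ∧
    m = l ⊔ ⨆ j : ℤ, ⨆ _ : 2 ≤ j, gSp q j

/-! Brackets add degrees, so `𝔪 ⊆ 𝔤_{≥1}` is closed under the bracket (`⁅𝔪, 𝔪⁆ ⊆ 𝔤_{≥2} ⊆ 𝔪`)
and `ad z` raises degrees for `z ∈ 𝔪`, hence is nilpotent. Invariance of `B` makes `𝔤_i ⊥ 𝔤_j`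
unless `i + j = 0`; as `f` has degree `-2`, `χ` kills `𝔤_{≥3}`, so on `⁅𝔪, 𝔪⁆` it only sees
`⁅𝔩, 𝔩⁆`, where it vanishes.

For the dimension, `dim 𝔤 - dim ker (ad f) = dim im (ad f)`. Goodness says that `ad f` is
injective on `𝔤_{≥1}` and maps `𝔤_{≤0}` onto `𝔤_{≤-2}`, so `im (ad f) ≅ 𝔤_{≥1} ⊕ 𝔤_{≤-2}`.
Pairing by `B` gives `dim 𝔤_{≤-2} = dim 𝔤_{≥2}`, and `(x, y) ↦ χ⁅x, y⁆` is nondegenerate on `𝔤₁`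
(again by injectivity of `ad f`), so its Lagrangian `𝔩` has dimension `dim 𝔤₁ / 2`. -/

theorem Module.End.isNilpotent_of_forall_mem_succ {R M : Type*} [Semiring R] [AddCommMonoid M]
    [Module R M] {T : Module.End R M} (F : ℕ → Submodule R M) {n : ℕ} (h0 : F 0 = ⊤)
    (hn : F n = ⊥) (hT : ∀ k, ∀ x ∈ F k, T x ∈ F (k + 1)) : IsNilpotent T := by
  have hpow : ∀ k x, (T ^ k) x ∈ F k := by
    intro k
    induction k with
    | zero => simp [h0]
    | succ k ih => intro x; rw [pow_succ', Module.End.mul_apply]; exact hT k _ (ih x)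
  exact ⟨n, LinearMap.ext fun x => by simpa [hn] using hpow n x⟩

theorem LinearMap.disjoint_iSup_ker_of_iSupIndep {R M N ι : Type*} [Ring R] [AddCommGroup M]
    [Module R M] [AddCommGroup N] [Module R N] {p : ι → Submodule R M} {r : ι → Submodule R N}
    (hr : iSupIndep r) (φ : M →ₗ[R] N) (hφ : ∀ i, p i ≤ (r i).comap φ)
    (hker : ∀ i, Disjoint (p i) (LinearMap.ker φ)) : Disjoint (⨆ i, p i) (LinearMap.ker φ) := by
  refine Submodule.disjoint_def.2 fun x hx hx0 => ?_
  obtain ⟨c, hc, rfl⟩ := (Submodule.mem_iSup_iff_exists_finsupp p x).1 hx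
  have hφc : ∀ i ∈ c.support, φ (c i) = 0 :=
    (iSupIndep_iff_finsetSum_eq_zero_imp_eq_zero r).1 hr c.support _ (fun i _ => hφ i (hc i))
      (by simpa [Finsupp.sum] using hx0)
  exact Finset.sum_eq_zero fun i hi =>
    Submodule.disjoint_def.1 (hker i) _ (hc i) (LinearMap.mem_ker.2 (hφc i hi))

theorem Submodule.finrank_sup_of_disjoint {K V : Type*} [DivisionRing K] [AddCommGroup V]
    [Module K V] [FiniteDimensional K V] {s t : Submodule K V} (h : Disjoint s t) :
    finrank K ↥(s ⊔ t) = finrank K s + finrank K t := by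
  rw [← Submodule.finrank_sup_add_finrank_inf_eq, h.eq_bot, finrank_bot, add_zero]

section SeparatingLeft

variable {K V : Type*} [Field K] [AddCommGroup V] [Module K V] {B : LinearMap.BilinForm K V}

theorem LinearMap.SeparatingLeft.eq_zero_of_sup_eq_top (hB : B.SeparatingLeft)
    {V₁ V₂ : Submodule K V} (hV : V₁ ⊔ V₂ = ⊤) {x : V} (h₁ : ∀ v ∈ V₁, B x v = 0)
    (h₂ : ∀ v ∈ V₂, B x v = 0) : x = 0 :=
  hB x fun y => (sup_le (show V₁ ≤ LinearMap.ker (B x) from h₁) h₂)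
    (hV ▸ Submodule.mem_top : y ∈ V₁ ⊔ V₂)

theorem LinearMap.SeparatingLeft.finrank_le_of_sup_eq_top [FiniteDimensional K V]
    (hB : B.SeparatingLeft) {U V₁ V₂ : Submodule K V} (hV : V₁ ⊔ V₂ = ⊤)
    (hU : ∀ u ∈ U, ∀ v ∈ V₂, B u v = 0) : finrank K U ≤ finrank K V₁ := by
  have hinj : Function.Injective (B.domRestrict₁₂ U V₁) := by
    refine (injective_iff_map_eq_zero _).2 fun u hu => Subtype.ext ?_
    refine hB.eq_zero_of_sup_eq_top hV (fun v hv => ?_) (hU u u.2)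
    simpa [LinearMap.domRestrict₁₂_apply] using LinearMap.congr_fun hu ⟨v, hv⟩
  calc finrank K U ≤ finrank K (Module.Dual K V₁) := LinearMap.finrank_le_finrank_of_injective hinj
    _ = finrank K V₁ := Subspace.dual_finrank_eq

end SeparatingLeft

section Grading

variable {q : L} {i j : ℤ} {x y : L}

theorem gSp_eq_eigenspace (q : L) (j : ℤ) : gSp q j = Module.End.eigenspace (ad ℂ L q) j := by
  ext x
  rw [Module.End.mem_eigenspace_iff, ad_apply]
  rfl

theorem iSupIndep_gSp (q : L) : iSupIndep (gSp q) := by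
  simpa only [Function.comp_def, ← gSp_eq_eigenspace] using
    (Module.End.eigenspaces_iSupIndep (ad ℂ L q)).comp (Int.cast_injective (α := ℂ))

theorem lie_mem_gSp (hx : x ∈ gSp q i) (hy : y ∈ gSp q j) : ⁅x, y⁆ ∈ gSp q (i + j) := by
  change ⁅q, x⁆ = (i : ℂ) • x at hx
  change ⁅q, y⁆ = (j : ℂ) • y at hy
  change ⁅q, ⁅x, y⁆⁆ = ((i + j : ℤ) : ℂ) • ⁅x, y⁆
  rw [leibniz_lie, hx, hy, smul_lie, lie_smul, Int.cast_add, add_smul]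

theorem apply_eq_zero_of_mem_gSp {B : LinearMap.BilinForm ℂ L}
    (hBinv : ∀ x y z : L, B ⁅x, y⁆ z = B x ⁅y, z⁆) (hij : i + j ≠ 0) (hx : x ∈ gSp q i)
    (hy : y ∈ gSp q j) : B x y = 0 := by
  change ⁅q, x⁆ = (i : ℂ) • x at hx
  change ⁅q, y⁆ = (j : ℂ) • y at hy
  have h := hBinv x q y
  rw [← lie_skew, hx, hy] at h
  simp only [map_neg, map_smul, LinearMap.neg_apply, LinearMap.smul_apply, smul_eq_mul] at h
  exact (mul_eq_zero.1 (by linear_combination -h : (i + j : ℂ) * B x y = 0)).resolve_left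
    (by exact_mod_cast hij)

end Grading

section GradedSubspaces

variable {q : L} {S T U : Set ℤ} {i j : ℤ} {x y : L}

def gSpOn (q : L) (S : Set ℤ) : Submodule ℂ L := ⨆ j ∈ S, gSp q j

theorem gSp_le_gSpOn (hj : j ∈ S) : gSp q j ≤ gSpOn q S :=
  le_biSup (gSp q) hj

theorem gSpOn_mono (h : S ⊆ T) : gSpOn q S ≤ gSpOn q T :=
  biSup_mono h

@[simp]
theorem gSpOn_singleton (q : L) (j : ℤ) : gSpOn q {j} = gSp q j := by
  simp [gSpOn]

theorem gSpOn_sup_eq_top (hq : ⨆ j, gSp q j = ⊤) (h : S ∪ T = Set.univ) :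
    gSpOn q S ⊔ gSpOn q T = ⊤ := by
  rw [gSpOn, gSpOn, ← iSup_union, h, ← hq]
  simp

theorem disjoint_gSpOn (h : Disjoint S T) : Disjoint (gSpOn q S) (gSpOn q T) :=
  (iSupIndep_gSp q).disjoint_biSup_biSup h

theorem map₂_gSpOn_le {P : Type*} [AddCommGroup P] [Module ℂ P]
    (β : L →ₗ[ℂ] L →ₗ[ℂ] P) {R : Submodule ℂ P}
    (h : ∀ i ∈ S, ∀ j ∈ T, ∀ x ∈ gSp q i, ∀ y ∈ gSp q j, β x y ∈ R) :
    Submodule.map₂ β (gSpOn q S) (gSpOn q T) ≤ R := by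
  simp only [gSpOn, Submodule.map₂_iSup_left, Submodule.map₂_iSup_right, iSup_le_iff]
  exact fun j hj i hi => Submodule.map₂_le.2 (h i hi j hj)

theorem lie_mem_gSpOn (h : ∀ i ∈ S, ∀ j ∈ T, i + j ∈ U) (hx : x ∈ gSpOn q S)
    (hy : y ∈ gSpOn q T) : ⁅x, y⁆ ∈ gSpOn q U :=
  map₂_gSpOn_le (ad ℂ L : L →ₗ[ℂ] Module.End ℂ L)
    (fun i hi j hj _ hx _ hy => gSp_le_gSpOn (h i hi j hj) (lie_mem_gSp hx hy))
    (Submodule.apply_mem_map₂ _ hx hy)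

theorem lie_mem_gSpOn_Ici {a b : ℤ} (hx : x ∈ gSpOn q (Set.Ici a))
    (hy : y ∈ gSpOn q (Set.Ici b)) : ⁅x, y⁆ ∈ gSpOn q (Set.Ici (a + b)) :=
  lie_mem_gSpOn (fun _ hi _ hj => Set.mem_Ici.2 (add_le_add (Set.mem_Ici.1 hi) (Set.mem_Ici.1 hj)))
    hx hy

theorem apply_eq_zero_of_mem_gSpOn {B : LinearMap.BilinForm ℂ L}
    (hBinv : ∀ x y z : L, B ⁅x, y⁆ z = B x ⁅y, z⁆) (h : ∀ i ∈ S, ∀ j ∈ T, i + j ≠ 0)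
    (hx : x ∈ gSpOn q S) (hy : y ∈ gSpOn q T) : B x y = 0 :=
  (Submodule.mem_bot ℂ).1 <| map₂_gSpOn_le B
    (fun i hi j hj _ hx _ hy => apply_eq_zero_of_mem_gSp hBinv (h i hi j hj) hx hy)
    (Submodule.apply_mem_map₂ _ hx hy)

variable [FiniteDimensional ℂ L]

theorem finrank_gSpOn_union (h : Disjoint S T) :
    finrank ℂ (gSpOn q (S ∪ T)) = finrank ℂ (gSpOn q S) + finrank ℂ (gSpOn q T) := by
  rw [gSpOn, iSup_union, ← Submodule.finrank_sup_of_disjoint (disjoint_gSpOn h)]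
  rfl

theorem exists_gSpOn_Ici_eq_top_and_eq_bot (hq : ⨆ j, gSp q j = ⊤) :
    ∃ a b : ℤ, gSpOn q (Set.Ici a) = ⊤ ∧ gSpOn q (Set.Ici b) = ⊥ := by
  have hfin := Submodule.finite_ne_bot_of_iSupIndep (iSupIndep_gSp q)
  obtain ⟨a, ha⟩ := hfin.bddBelow
  obtain ⟨b, hb⟩ := hfin.bddAbove
  refine ⟨a, b + 1, eq_top_iff.2 (hq ▸ iSup_le fun j => ?_), le_bot_iff.1 (iSup₂_le fun j hj => ?_)⟩
  · by_cases hj : gSp q j = ⊥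
    · simp [hj]
    · exact gSp_le_gSpOn (ha hj)
  · refine (not_ne_iff.1 fun hne => ?_).le
    have := hb hne
    simp only [Set.mem_Ici] at hj
    omega

theorem isNilpotent_ad_of_mem_gSpOn_Ici_one (hq : ⨆ j, gSp q j = ⊤) {z : L}
    (hz : z ∈ gSpOn q (Set.Ici 1)) : IsNilpotent (ad ℂ L z) := by
  obtain ⟨a, b, ha, hb⟩ := exists_gSpOn_Ici_eq_top_and_eq_bot hq
  refine Module.End.isNilpotent_of_forall_mem_succ (fun k => gSpOn q (Set.Ici (a + k)))
    (n := (b - a).toNat) (by simpa using ha)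
    (le_bot_iff.1 (hb ▸ gSpOn_mono (Set.Ici_subset_Ici.2 (by omega)))) fun k x hx =>
    gSpOn_mono (Set.Ici_subset_Ici.2 (by push_cast; omega)) (lie_mem_gSpOn_Ici hz hx)

end GradedSubspaces

section GoodGrading

variable {B : LinearMap.BilinForm ℂ L} {q f : L}

theorem disjoint_gSpOn_Ici_one_ker_ad (hgood : IsGoodGrading q f) :
    Disjoint (gSpOn q (Set.Ici 1)) (LinearMap.ker (ad ℂ L f)) :=
  LinearMap.disjoint_iSup_ker_of_iSupIndep ((iSupIndep_gSp q).comp (add_right_injective (-2)))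
    (ad ℂ L f) (fun _ => iSup_le fun _ _ hx => lie_mem_gSp hgood.f_mem hx)
    fun j => by
      by_cases hj : j ∈ Set.Ici 1
      · simpa only [hj, iSup_pos] using
          Submodule.disjoint_def.2 fun x hx hfx => hgood.inj j hj x hx hfx
      · simp only [hj, iSup_false, disjoint_bot_left]

theorem range_ad_eq (hgood : IsGoodGrading q f) :
    LinearMap.range (ad ℂ L f) =
      (gSpOn q (Set.Ici 1)).map (ad ℂ L f) ⊔ gSpOn q (Set.Iic (-2)) := by
  refine le_antisymm ?_ (sup_le LinearMap.map_le_range (iSup₂_le fun k hk y hy => ?_))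
  · rw [LinearMap.range_eq_map, ← gSpOn_sup_eq_top hgood.decomp Set.Ici_union_Iio,
      Submodule.map_sup]
    refine sup_le_sup_left (Submodule.map_le_iff_le_comap.2 (iSup₂_le fun j hj x hx => ?_)) _
    refine gSp_le_gSpOn ?_ (lie_mem_gSp hgood.f_mem hx)
    simp only [Set.mem_Iio, Set.mem_Iic] at hj ⊢
    omega
  · obtain ⟨x, -, hx⟩ := hgood.surj (k + 2) (by simp only [Set.mem_Iic] at hk; omega) y
      (by rwa [add_sub_cancel_right])
    exact ⟨x, hx⟩

variable [FiniteDimensional ℂ L]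

theorem finrank_range_ad (hBnondeg : B.SeparatingLeft)
    (hBinv : ∀ x y z : L, B ⁅x, y⁆ z = B x ⁅y, z⁆) (hgood : IsGoodGrading q f) :
    finrank ℂ (LinearMap.range (ad ℂ L f)) =
      finrank ℂ (gSp q 1) + 2 * finrank ℂ (gSpOn q (Set.Ici 2)) := by
  have hmap : finrank ℂ ((gSpOn q (Set.Ici 1)).map (ad ℂ L f)) =
      finrank ℂ (gSpOn q (Set.Ici 1)) := by
    rw [← LinearMap.range_domRestrict]
    exact LinearMap.finrank_range_of_inj
      (LinearMap.injective_domRestrict_iff.2 (disjoint_gSpOn_Ici_one_ker_ad hgood))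
  have hdisj : Disjoint ((gSpOn q (Set.Ici 1)).map (ad ℂ L f)) (gSpOn q (Set.Iic (-2))) := by
    refine (disjoint_gSpOn (q := q) (Set.Iic_disjoint_Ioi le_rfl).symm).mono_left ?_
    refine Submodule.map_le_iff_le_comap.2 (iSup₂_le fun j hj x hx => ?_)
    refine gSp_le_gSpOn ?_ (lie_mem_gSp hgood.f_mem hx)
    simp only [Set.mem_Ici, Set.mem_Ioi] at hj ⊢
    omega
  have hsymm : finrank ℂ (gSpOn q (Set.Iic (-2))) = finrank ℂ (gSpOn q (Set.Ici 2)) := by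
    refine le_antisymm (hBnondeg.finrank_le_of_sup_eq_top
      (gSpOn_sup_eq_top hgood.decomp Set.Ici_union_Iio)
      fun u hu v hv => apply_eq_zero_of_mem_gSpOn hBinv ?_ hu hv)
      (hBnondeg.finrank_le_of_sup_eq_top (gSpOn_sup_eq_top hgood.decomp Set.Iic_union_Ioi)
      fun u hu v hv => apply_eq_zero_of_mem_gSpOn hBinv ?_ hu hv)
    all_goals
      intro i hi j hj
      simp only [Set.mem_Ici, Set.mem_Iic, Set.mem_Iio, Set.mem_Ioi] at hi hj
      omega
  have hIci : Set.Ici (1 : ℤ) = {1} ∪ Set.Ici 2 := by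
    ext j
    simp only [Set.mem_Ici, Set.mem_union, Set.mem_singleton_iff]
    omega
  have hsplit := finrank_gSpOn_union (q := q) (S := {1}) (T := Set.Ici 2)
    (Set.disjoint_singleton_left.2 (by simp))
  rw [range_ad_eq hgood, Submodule.finrank_sup_of_disjoint hdisj, hmap, hsymm, hIci, hsplit,
    gSpOn_singleton]
  ring

end GoodGrading

section GoodAlgebra

variable {B : LinearMap.BilinForm ℂ L} {q f : L} {l : Submodule ℂ L}

theorem apply_lie_eq_zero_of_mem_sup (hBinv : ∀ x y z : L, B ⁅x, y⁆ z = B x ⁅y, z⁆)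
    (hf : f ∈ gSp q (-2)) (hl : l ≤ gSp q 1) (hiso : ∀ x ∈ l, ∀ y ∈ l, B f ⁅x, y⁆ = 0)
    {x y : L} (hx : x ∈ l ⊔ gSpOn q (Set.Ici 2)) (hy : y ∈ l ⊔ gSpOn q (Set.Ici 2)) :
    B f ⁅x, y⁆ = 0 := by
  have hl1 : l ≤ gSpOn q (Set.Ici 1) := hl.trans (gSp_le_gSpOn Set.self_mem_Ici)
  have hB3 : ∀ z ∈ gSpOn q (Set.Ici 3), B f z = 0 := by
    refine fun z hz => apply_eq_zero_of_mem_gSpOn hBinv (S := {-2}) ?_ (by simpa using hf) hz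
    intro i hi j hj
    simp only [Set.mem_Ici, Set.mem_singleton_iff] at hi hj
    omega
  obtain ⟨a, ha, b, hb, rfl⟩ := Submodule.mem_sup.1 hx
  obtain ⟨c, hc, d, hd, rfl⟩ := Submodule.mem_sup.1 hy
  have hab : a + b ∈ gSpOn q (Set.Ici 1) :=
    add_mem (hl1 ha) (gSpOn_mono (Set.Ici_subset_Ici.2 one_le_two) hb)
  rw [lie_add, add_lie, map_add, map_add, hiso a ha c hc,
    hB3 _ (by simpa using lie_mem_gSpOn_Ici hb (hl1 hc)),
    hB3 _ (by simpa using lie_mem_gSpOn_Ici hab hd), add_zero, add_zero]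

variable [FiniteDimensional ℂ L]

theorem two_mul_finrank_eq_finrank_gSp_one (hBnondeg : B.SeparatingLeft)
    (hBinv : ∀ x y z : L, B ⁅x, y⁆ z = B x ⁅y, z⁆) (hgood : IsGoodGrading q f)
    (hl : l ≤ gSp q 1) (hiso : ∀ x ∈ l, ∀ y ∈ l, B f ⁅x, y⁆ = 0)
    (hmax : ∀ x ∈ gSp q 1, (∀ y ∈ l, B f ⁅x, y⁆ = 0) → x ∈ l) :
    2 * finrank ℂ l = finrank ℂ (gSp q 1) := by
  set ω := (B.compLeft (ad ℂ L f)).restrict (gSp q 1)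
  set W := l.comap (gSp q 1).subtype
  have hω : ∀ x y : gSp q 1, ω x y = B f ⁅(x : L), y⁆ := fun x y => hBinv f x y
  have horth : ω.orthogonal W = W := by
    ext x
    refine ⟨fun hx => hmax x x.2 fun y hy => ?_, fun hx y hy => ?_⟩
    · rw [← lie_skew, map_neg, neg_eq_zero, ← hω ⟨y, hl hy⟩ x]
      exact hx ⟨y, hl hy⟩ hy
    · exact (hω y x).trans (hiso y hy x hx)
  have hker : W ⊓ LinearMap.ker ω = ⊥ := by
    refine eq_bot_iff.2 fun x ⟨_, hx⟩ => ?_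
    have hfx : ⁅f, (x : L)⁆ = 0 := by
      refine hBnondeg.eq_zero_of_sup_eq_top (gSpOn_sup_eq_top (S := {1}) (T := {1}ᶜ)
        hgood.decomp (Set.union_compl_self _)) (fun y hy => ?_) fun y hy => ?_
      · exact LinearMap.congr_fun hx ⟨y, by simpa using hy⟩
      · refine apply_eq_zero_of_mem_gSpOn hBinv (S := {-1}) ?_
          (by simpa using lie_mem_gSp hgood.f_mem x.2) hy
        intro i hi j hj
        simp only [Set.mem_singleton_iff, Set.mem_compl_iff] at hi hj
        omega
    exact Subtype.ext (hgood.inj 1 le_rfl x x.2 hfx)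
  have hdim := ω.finrank_add_finrank_orthogonal' W
  rw [horth, hker, finrank_bot, add_zero, (Submodule.comapSubtypeEquivOfLe hl).finrank_eq] at hdim
  omega

theorem finrank_sup_gSpOn_Ici_two (hl : l ≤ gSp q 1) :
    finrank ℂ ↥(l ⊔ gSpOn q (Set.Ici 2)) = finrank ℂ l + finrank ℂ (gSpOn q (Set.Ici 2)) :=
  Submodule.finrank_sup_of_disjoint <| (disjoint_gSpOn (S := {1}) (T := Set.Ici 2)
    (Set.disjoint_singleton_left.2 (by simp))).mono_left (hl.trans (gSpOn_singleton q 1).ge)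

end GoodAlgebra

theorem good_algebra_properties_general
    [FiniteDimensional ℂ L]
    (B : LinearMap.BilinForm ℂ L)
    (hBnondeg : ∀ x : L, (∀ y : L, B x y = 0) → x = 0)
    (hBinv : ∀ x y z : L, B ⁅x, y⁆ z = B x ⁅y, z⁆)
    (q f : L)
    (hgood : IsGoodGrading q f)
    (m : Submodule ℂ L) (hm : IsGoodAlgebra B q f m) :
    (∀ x ∈ m, ∀ y ∈ m, ⁅x, y⁆ ∈ m) ∧
    (∀ z ∈ m, IsNilpotent (ad ℂ L z)) ∧
    (∀ x ∈ m, ∀ y ∈ m, B f ⁅x, y⁆ = 0) ∧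
    2 * Module.finrank ℂ m = Module.finrank ℂ L - Module.finrank ℂ (LinearMap.ker (ad ℂ L f)) := by
  obtain ⟨l, hl, hiso, hmax, hm⟩ := hm
  replace hm : m = l ⊔ gSpOn q (Set.Ici 2) := hm
  subst hm
  have hm1 : l ⊔ gSpOn q (Set.Ici 2) ≤ gSpOn q (Set.Ici 1) :=
    sup_le (hl.trans (gSp_le_gSpOn Set.self_mem_Ici)) (gSpOn_mono (Set.Ici_subset_Ici.2 one_le_two))
  refine ⟨fun x hx y hy => Submodule.mem_sup_right
      (by simpa using lie_mem_gSpOn_Ici (hm1 hx) (hm1 hy)),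
    fun z hz => isNilpotent_ad_of_mem_gSpOn_Ici_one hgood.decomp (hm1 hz),
    fun x hx y hy => apply_lie_eq_zero_of_mem_sup hBinv hgood.f_mem hl hiso hx hy, ?_⟩
  have hrank := LinearMap.finrank_range_add_finrank_ker (ad ℂ L f)
  rw [finrank_range_ad hBnondeg hBinv hgood] at hrank
  rw [finrank_sup_gSpOn_Ici_two hl]
  have := two_mul_finrank_eq_finrank_gSp_one hBnondeg hBinv hgood hl hiso hmax
  omega

/-- Basic properties of a good algebra `𝔪`: it is a Lie subalgebra consisting of
ad-nilpotent elements, `χ = B(f,·)` restricts to a character of `𝔪`, and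
`2 dim 𝔪 = dim 𝔤 − dim ker (ad f)`. -/
theorem good_algebra_properties
    [FiniteDimensional ℂ L] [LieAlgebra.IsSimple ℂ L]
    (B : LinearMap.BilinForm ℂ L)
    (hBsymm : ∀ x y : L, B x y = B y x)
    (hBnondeg : ∀ x : L, (∀ y : L, B x y = 0) → x = 0)
    (hBinv : ∀ x y z : L, B ⁅x, y⁆ z = B x ⁅y, z⁆)
    (q f : L) (hfnil : IsNilpotent (ad ℂ L f))
    (hgood : IsGoodGrading q f)
    (m : Submodule ℂ L) (hm : IsGoodAlgebra B q f m) :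
    (∀ x ∈ m, ∀ y ∈ m, ⁅x, y⁆ ∈ m) ∧
    (∀ z ∈ m, IsNilpotent (ad ℂ L z)) ∧
    (∀ x ∈ m, ∀ y ∈ m, B f ⁅x, y⁆ = 0) ∧
    2 * Module.finrank ℂ m = Module.finrank ℂ L - Module.finrank ℂ (LinearMap.ker (ad ℂ L f)) :=
  good_algebra_properties_general B hBnondeg hBinv q f hgood m hm
end
end

section
/- Let (e,h,f) be an sl₂-triple in 𝔤 and let 𝔪₀ ⊆ ker(ad f) be a linear subspace. Then the linear map {ξ ∈ 𝔤* : ξ(⁅e,x⁆) = 0 for all x ∈ 𝔤} → 𝔪₀* sending ξ to its restriction ξ|_{𝔪₀} is surjective. -/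
/-!
Since `𝔪₀ ⊆ ker (ad f)`, it suffices that `ker f ∩ im e = 0` in every finite-dimensional
`sl₂`-module: then a functional on `𝔪₀` extends to `𝔤` vanishing on `im (ad e)`.
If `ker f ∩ im e ≠ 0`, this `h`-stable subspace contains an `h`-eigenvector `v`, primitive
for the opposite triple `(-h, f, e)`, so its weight is `-n` with `n ∈ ℕ`. Write `v = e u₁`
with `u₁` of generalized weight `-n - 2`; using `[e, f] = h` one finds inductively `u_k ≠ 0`
of generalized weight `-n - 2k` with `e u_{k+1} = u_k` and `e f u_k = k (h + k - 1) u_k`.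
Each step inverts `h + k ± 1` on a generalized weight space, possible because
`-n - k - 1 ≠ 0`. Hence `h` would have infinitely many eigenvalues.
-/

open LieAlgebra Module

noncomputable section

variable {L : Type*} [LieRing L] [LieAlgebra ℂ L]

namespace Module.End

variable {K V : Type*} [Field K] [AddCommGroup V] [Module K V]

lemma eq_zero_of_mem_maxGenEigenspace_of_apply_eq_smul {f : End K V} {μ c : K} (hc : c ≠ μ)
    {x : V} (hx : x ∈ f.maxGenEigenspace μ) (hfx : f x = c • x) : x = 0 := by
  have hxc : x ∈ f.maxGenEigenspace c :=
    eigenspace_le_maxGenEigenspace (mem_eigenspace_iff.mpr hfx)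
  exact (f.disjoint_genEigenspace hc ⊤ ⊤).le_bot ⟨hxc, hx⟩

lemma exists_mem_maxGenEigenspace_apply_sub_smul_eq [FiniteDimensional K V] {f : End K V}
    {μ c : K} (hc : c ≠ μ) {x : V} (hx : x ∈ f.maxGenEigenspace μ) :
    ∃ y ∈ f.maxGenEigenspace μ, f y - c • y = x := by
  let g : End K (f.maxGenEigenspace μ) := (f - c • 1).restrict
    (mapsTo_maxGenEigenspace_of_comm (by simp [Commute, SemiconjBy, mul_sub, sub_mul]) μ)
  have hg : Function.Injective g := by
    rw [← LinearMap.ker_eq_bot, Submodule.eq_bot_iff]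
    rintro ⟨y, hy⟩ hgy
    have : f y - c • y = 0 := congrArg Subtype.val hgy
    simpa using eq_zero_of_mem_maxGenEigenspace_of_apply_eq_smul hc hy (sub_eq_zero.mp this)
  obtain ⟨y, hy⟩ := LinearMap.injective_iff_surjective.mp hg ⟨x, hx⟩
  exact ⟨y, y.2, congrArg Subtype.val hy⟩

lemma exists_mem_maxGenEigenspace_apply_eq [IsAlgClosed K] [FiniteDimensional K V]
    {f g : End K V} {c : K}
    (hg : ∀ μ, ∀ x ∈ f.maxGenEigenspace μ, g x ∈ f.maxGenEigenspace (μ + c))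
    {μ : K} {x : V} (hx : g x ∈ f.maxGenEigenspace μ) :
    ∃ y ∈ f.maxGenEigenspace (μ - c), g y = g x := by
  have key : ∀ z ∈ ⨆ ν, f.maxGenEigenspace ν, ∃ y ∈ f.maxGenEigenspace (μ - c),
      g (z - y) ∈ ⨆ (ν) (_ : ν ≠ μ), f.maxGenEigenspace ν := by
    intro z hz
    induction hz using Submodule.iSup_induction' with
    | mem ν z hz =>
      by_cases hν : ν = μ - c
      · exact ⟨z, hν ▸ hz, by simp⟩
      · refine ⟨0, zero_mem _, Submodule.mem_iSup_of_mem (ν + c) ?_⟩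
        exact Submodule.mem_iSup_of_mem (by contrapose! hν; rw [← hν]; ring)
          (by simpa using hg ν z hz)
    | zero => exact ⟨0, zero_mem _, by simp⟩
    | add _ _ _ _ h₁ h₂ =>
      obtain ⟨y₁, hy₁, h₁⟩ := h₁
      obtain ⟨y₂, hy₂, h₂⟩ := h₂
      refine ⟨y₁ + y₂, add_mem hy₁ hy₂, ?_⟩
      rw [add_sub_add_comm, map_add]
      exact add_mem h₁ h₂
  obtain ⟨y, hy, hxy⟩ := key x (f.iSup_maxGenEigenspace_eq_top ▸ Submodule.mem_top)
  refine ⟨y, hy, (sub_eq_zero.mp ?_).symm⟩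
  have hgy : g y ∈ f.maxGenEigenspace μ := by simpa using hg _ y hy
  rw [← map_sub]
  exact (f.independent_maxGenEigenspace μ).le_bot
    ⟨by simpa using sub_mem hx hgy, by simpa using hxy⟩

end Module.End

namespace IsSl2Triple

open LieModule

section CommRing

variable {R L M : Type*} [CommRing R] [LieRing L] [LieAlgebra R L]
  [AddCommGroup M] [Module R M] [LieRingModule L M] [LieModule R L M] {h e f : L}

lemma lie_e_mem_maxGenEigenspace (t : IsSl2Triple h e f) {μ : R} {m : M}
    (hm : m ∈ (toEnd R L M h).maxGenEigenspace μ) :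
    ⁅e, m⁆ ∈ (toEnd R L M h).maxGenEigenspace (μ + 2) := by
  have he : e ∈ (toEnd R L L h).maxGenEigenspace 2 := Module.End.eigenspace_le_maxGenEigenspace
    (Module.End.mem_eigenspace_iff.mpr (t.lie_h_e_smul R))
  simpa [add_comm] using lie_mem_maxGenEigenspace_toEnd he hm

lemma lie_f_mem_maxGenEigenspace (t : IsSl2Triple h e f) {μ : R} {m : M}
    (hm : m ∈ (toEnd R L M h).maxGenEigenspace μ) :
    ⁅f, m⁆ ∈ (toEnd R L M h).maxGenEigenspace (μ - 2) := by
  have hf : f ∈ (toEnd R L L h).maxGenEigenspace (-2) := Module.End.eigenspace_le_maxGenEigenspace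
    (Module.End.mem_eigenspace_iff.mpr (by simpa using t.lie_lie_smul_f R))
  simpa [neg_add_eq_sub] using lie_mem_maxGenEigenspace_toEnd hf hm

lemma lie_e_lie_h (t : IsSl2Triple h e f) (m : M) :
    ⁅e, ⁅h, m⁆⁆ = ⁅h, ⁅e, m⁆⁆ - 2 • ⁅e, m⁆ := by
  rw [leibniz_lie h e m, t.lie_h_e_nsmul, nsmul_lie]
  abel

lemma lie_e_lie_f (t : IsSl2Triple h e f) (m : M) :
    ⁅e, ⁅f, m⁆⁆ = ⁅f, ⁅e, m⁆⁆ + ⁅h, m⁆ := by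
  rw [leibniz_lie e f m, t.lie_e_f, add_comm]

end CommRing

variable {K L M : Type*} [Field K] [LieRing L] [LieAlgebra K L]
  [AddCommGroup M] [Module K M] [LieRingModule L M] [LieModule K L M] [FiniteDimensional K M]
  {h e f : L}

lemma exists_lie_e_eq_of_lie_e_lie_f_eq (t : IsSl2Triple h e f) {μ k : K} (hk : k ≠ 0)
    (hμk : μ + k - 1 ≠ 0) {u : M} (hu : u ∈ (toEnd K L M h).maxGenEigenspace μ)
    (hefu : ⁅e, ⁅f, u⁆⁆ = k • ⁅h, u⁆ + (k * (k - 1)) • u) :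
    ∃ u' ∈ (toEnd K L M h).maxGenEigenspace (μ - 2), ⁅e, u'⁆ = u ∧
      ⁅e, ⁅f, u'⁆⁆ = (k + 1) • ⁅h, u'⁆ + ((k + 1) * k) • u' := by
  obtain ⟨y, hy, hfu⟩ := Module.End.exists_mem_maxGenEigenspace_apply_sub_smul_eq
    (c := -(k + 1)) (by contrapose! hμk; linear_combination -hμk)
    (t.lie_f_mem_maxGenEigenspace hu)
  rw [toEnd_apply_apply] at hfu
  have hey : ⁅e, y⁆ = k • u := by
    rw [← sub_eq_zero]
    refine Module.End.eq_zero_of_mem_maxGenEigenspace_of_apply_eq_smul (f := toEnd K L M h)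
      (c := 1 - k) (μ := μ) (by contrapose! hμk; linear_combination -hμk) ?_ ?_
    · exact sub_mem (by simpa using t.lie_e_mem_maxGenEigenspace hy) (Submodule.smul_mem _ _ hu)
    · have := congrArg (⁅e, ·⁆) hfu
      simp only [lie_sub, lie_smul, t.lie_e_lie_h, hefu] at this
      rw [toEnd_apply_apply, lie_sub, lie_smul]
      linear_combination (norm := module) this
  set u' := k⁻¹ • y
  have hyu' : y = k • u' := (smul_inv_smul₀ hk y).symm
  rw [hyu', lie_smul] at hey
  have heu' : ⁅e, u'⁆ = u := smul_right_injective M hk hey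
  refine ⟨u', Submodule.smul_mem _ _ hy, heu', ?_⟩
  rw [t.lie_e_lie_f, heu', ← hfu, hyu']
  simp only [lie_smul]
  module

variable [CharZero K] [IsAlgClosed K]

lemma exists_ne_zero_mem_maxGenEigenspace (t : IsSl2Triple h e f) {n : ℕ} {v : M} (hv : v ≠ 0)
    (hfv : ⁅f, v⁆ = 0) (hhv : ⁅h, v⁆ = -(n : K) • v)
    (hev : v ∈ LinearMap.range (toEnd K L M e)) (k : ℕ) :
    ∃ u ∈ (toEnd K L M h).maxGenEigenspace (-n - 2 * (k + 1)), u ≠ 0 ∧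
      ⁅e, ⁅f, u⁆⁆ = (k + 1 : K) • ⁅h, u⁆ + ((k + 1) * k : K) • u := by
  induction k with
  | zero =>
    obtain ⟨w, rfl⟩ := hev
    have hv' : toEnd K L M e w ∈ (toEnd K L M h).maxGenEigenspace (-n) :=
      Module.End.eigenspace_le_maxGenEigenspace (Module.End.mem_eigenspace_iff.mpr hhv)
    obtain ⟨u, hu, heu⟩ := Module.End.exists_mem_maxGenEigenspace_apply_eq
      (fun _ _ ↦ t.lie_e_mem_maxGenEigenspace) hv'
    simp only [toEnd_apply_apply] at heu hfv hv
    refine ⟨u, by simpa using hu, by rintro rfl; simp_all, ?_⟩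
    simp [t.lie_e_lie_f, heu, hfv]
  | succ k ih =>
    obtain ⟨u, hu, hu0, hefu⟩ := ih
    have hnk : -n - 2 * (k + 1) + (k + 1) - 1 ≠ (0 : K) := by
      have : (n + k + 2 : K) ≠ 0 := by norm_cast
      contrapose! this
      linear_combination -this
    obtain ⟨u', hu', rfl, hefu'⟩ :=
      t.exists_lie_e_eq_of_lie_e_lie_f_eq (Nat.cast_add_one_ne_zero k) hnk hu (by simpa using hefu)
    refine ⟨u', by rwa [Nat.cast_succ, mul_add_one, ← sub_sub], by rintro rfl; simp_all, ?_⟩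
    simpa [Nat.cast_succ] using hefu'

theorem disjoint_ker_toEnd_f_range_toEnd_e (t : IsSl2Triple h e f) :
    Disjoint (LinearMap.ker (toEnd K L M f)) (LinearMap.range (toEnd K L M e)) := by
  set W := LinearMap.ker (toEnd K L M f) ⊓ LinearMap.range (toEnd K L M e)
  have hW : ∀ m ∈ W, toEnd K L M h m ∈ W := by
    rintro _ ⟨hfm, w, rfl⟩
    simp only [SetLike.mem_coe, LinearMap.mem_ker, toEnd_apply_apply] at hfm
    refine ⟨?_, ⁅h, w⁆ + 2 • w, ?_⟩
    · change ⁅f, ⁅h, ⁅e, w⁆⁆⁆ = 0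
      rw [leibniz_lie f h, ← lie_skew, t.lie_h_f_nsmul, neg_neg, nsmul_lie, hfm, lie_zero,
        smul_zero, add_zero]
    · rw [toEnd_apply_apply, lie_add, t.lie_e_lie_h, lie_nsmul, sub_add_cancel]
      rfl
  rw [disjoint_iff]
  by_contra hW0
  have : Nontrivial W := Submodule.nontrivial_iff_ne_bot.mpr hW0
  obtain ⟨μ, hμ⟩ := Module.End.exists_eigenvalue ((toEnd K L M h).restrict hW)
  obtain ⟨⟨v, hfv, hev⟩, hv⟩ := hμ.exists_hasEigenvector
  have hv0 : v ≠ 0 := fun hv0 ↦ hv.2 (Subtype.ext hv0)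
  have hhv : ⁅h, v⁆ = μ • v := congrArg Subtype.val hv.apply_eq_smul
  obtain ⟨n, hn⟩ : ∃ n : ℕ, -μ = n :=
    HasPrimitiveVectorWith.exists_nat (t := t.symm) ⟨hv0, by simp [hhv], hfv⟩
  have hμn : μ = -n := by rw [← hn, neg_neg]
  have heig : ∀ k : ℕ, (toEnd K L M h).HasEigenvalue (-n - 2 * (k + 1)) := fun k ↦ by
    obtain ⟨u, hu, hu0, -⟩ := t.exists_ne_zero_mem_maxGenEigenspace hv0 hfv (hμn ▸ hhv) hev k
    exact (Module.End.hasUnifEigenvalue_iff_hasUnifEigenvalue_one (by simp)).mp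
      ((Submodule.ne_bot_iff _).mpr ⟨u, hu, hu0⟩)
  refine (Set.infinite_range_of_injective (fun a b hab ↦ ?_)).mono (Set.range_subset_iff.mpr heig)
    (toEnd K L M h).finite_hasEigenvalue
  simpa using hab

end IsSl2Triple

lemma LinearMap.exists_extend_of_disjoint {K V V' : Type*} [Field K] [AddCommGroup V]
    [Module K V] [AddCommGroup V'] [Module K V'] {p q : Submodule K V} (hpq : Disjoint p q)
    (φ : p →ₗ[K] V') :
    ∃ ψ : V →ₗ[K] V', ψ.comp p.subtype = φ ∧ q ≤ LinearMap.ker ψ := by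
  obtain ⟨s, hs⟩ := LinearMap.exists_leftInverse_of_injective (q.mkQ.comp p.subtype) (by
    rwa [LinearMap.ker_comp, Submodule.ker_mkQ, ← Submodule.disjoint_iff_comap_eq_bot])
  refine ⟨φ.comp (s.comp q.mkQ), ?_, fun x hx ↦ ?_⟩
  · rw [LinearMap.comp_assoc, LinearMap.comp_assoc, hs, LinearMap.comp_id]
  · simp [(Submodule.Quotient.mk_eq_zero q).mpr hx]

theorem restriction_from_ker_ad_e_surjective_general
    [FiniteDimensional ℂ L]
    (e h f : L)
    (t1 : ⁅h, e⁆ = (2 : ℂ) • e) (t2 : ⁅h, f⁆ = (-2 : ℂ) • f) (t3 : ⁅e, f⁆ = h)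
    (m₀ : Submodule ℂ L) (hm₀ : ∀ z ∈ m₀, ⁅f, z⁆ = 0) :
    Function.Surjective
      (fun ξ : {ξ : Module.Dual ℂ L // ∀ x : L, ξ ⁅e, x⁆ = 0} =>
        ((ξ : Module.Dual ℂ L).comp m₀.subtype : Module.Dual ℂ ↥m₀)) := by
  intro φ
  have hdisj : Disjoint m₀ (LinearMap.range (LieModule.toEnd ℂ L L e)) := by
    rcases eq_or_ne h 0 with rfl | hh
    · obtain rfl : e = 0 := by simpa using t1.symm
      simp
    · have t : IsSl2Triple h e f :=
        ⟨hh, t3, by rw [t1, ofNat_smul_eq_nsmul], by rw [t2, neg_smul, ofNat_smul_eq_nsmul]⟩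
      exact t.disjoint_ker_toEnd_f_range_toEnd_e.mono_left fun z hz ↦ hm₀ z hz
  obtain ⟨ψ, hψφ, hψ⟩ := LinearMap.exists_extend_of_disjoint hdisj φ
  exact ⟨⟨ψ, fun x ↦ hψ ⟨x, rfl⟩⟩, hψφ⟩

/-- If `𝔪₀ ⊆ ker (ad f)` for an sl₂-triple `(e, h, f)`, then the restriction map
`ker ad*(e) → 𝔪₀*` is surjective. -/
theorem restriction_from_ker_ad_e_surjective
    [FiniteDimensional ℂ L] [LieAlgebra.IsSimple ℂ L]
    (B : LinearMap.BilinForm ℂ L)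
    (hBsymm : ∀ x y : L, B x y = B y x)
    (hBnondeg : ∀ x : L, (∀ y : L, B x y = 0) → x = 0)
    (hBinv : ∀ x y z : L, B ⁅x, y⁆ z = B x ⁅y, z⁆)
    (e h f : L)
    (t1 : ⁅h, e⁆ = (2 : ℂ) • e) (t2 : ⁅h, f⁆ = (-2 : ℂ) • f) (t3 : ⁅e, f⁆ = h)
    (m₀ : Submodule ℂ L) (hm₀ : ∀ z ∈ m₀, ⁅f, z⁆ = 0) :
    Function.Surjective
      (fun ξ : {ξ : Module.Dual ℂ L // ∀ x : L, ξ ⁅e, x⁆ = 0} =>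
        ((ξ : Module.Dual ℂ L).comp m₀.subtype : Module.Dual ℂ ↥m₀)) :=
  restriction_from_ker_ad_e_surjective_general e h f t1 t2 t3 m₀ hm₀
end
end
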